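/- arXiv:2509.20329 — 2 statements merged into one kernel-verified Lean document; each statement's English description precedes it below -/
import Mathlib

section
/- Let m, n ≥ 1, let G' ∈ ℝ^{m×n}, and let Δ ≥ 0. Then the set of maximizers over y ∈ Δ(n) of the robust objective min_{x ∈ Δ(m), D ∈ 𝒟} xᵀ(G' − D)y is exactly the security-policy set S(G'). In other words, a victim who optimizes against worst-case stealthy deception behaves identically to a victim who treats the announced game G' as the true payoff matrix. -/
open Matrix Finset

/-- Set of admissible (stealthy) deceptions: every column has ℓ1 norm at most `Δ`. -/
def Dset (m n : ℕ) (Δ : ℝ) : Set (Matrix (Fin m) (Fin n) ℝ) :=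
  {D | ∀ j, ∑ i, |D i j| ≤ Δ}

/-- Row player's best-response value against `y`: `min_{x ∈ Δ(m)} xᵀ A y`. -/
noncomputable def innerMin {m n : ℕ} (A : Matrix (Fin m) (Fin n) ℝ) (y : Fin n → ℝ) : ℝ :=
  sInf {r | ∃ x ∈ stdSimplex ℝ (Fin m), r = x ⬝ᵥ A *ᵥ y}

/-- Value of the zero-sum game `A`: `max_{y ∈ Δ(n)} min_{x ∈ Δ(m)} xᵀ A y`. -/
noncomputable def gameValue {m n : ℕ} (A : Matrix (Fin m) (Fin n) ℝ) : ℝ :=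
  sSup {r | ∃ y ∈ stdSimplex ℝ (Fin n), r = innerMin A y}

/-- Column player's security-policy set `S(A)`. -/
def secPolicies {m n : ℕ} (A : Matrix (Fin m) (Fin n) ℝ) : Set (Fin n → ℝ) :=
  {y | y ∈ stdSimplex ℝ (Fin n) ∧ ∀ i, gameValue A ≤ (A *ᵥ y) i}

/-- Set of inducible values `V_ind(G)`. -/
def Vind {m n : ℕ} (G : Matrix (Fin m) (Fin n) ℝ) (Δ : ℝ) : Set ℝ :=
  {v | ∃ D ∈ Dset m n Δ, ∃ y ∈ stdSimplex ℝ (Fin n), ∀ i, v ≤ ((G + D) *ᵥ y) i}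

/-- Robust victim objective: `min_{x ∈ Δ(m), D ∈ 𝒟} xᵀ (G' - D) y`. -/
noncomputable def robustObj {m n : ℕ} (G' : Matrix (Fin m) (Fin n) ℝ) (Δ : ℝ)
    (y : Fin n → ℝ) : ℝ :=
  sInf {r | ∃ x ∈ stdSimplex ℝ (Fin m), ∃ D ∈ Dset m n Δ, r = x ⬝ᵥ (G' - D) *ᵥ y}

section helpers
variable {m n : ℕ}

noncomputable def pureV (m : ℕ) (i : Fin m) : Fin m → ℝ := fun i' => if i' = i then 1 else 0

lemma pureV_mem (i : Fin m) : pureV m i ∈ stdSimplex ℝ (Fin m) := by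
  constructor
  · intro i'; unfold pureV; split <;> norm_num
  · simp [pureV]

lemma pureV_dot (i : Fin m) (v : Fin m → ℝ) : pureV m i ⬝ᵥ v = v i := by
  simp [pureV, dotProduct, ite_mul]

lemma dot_ge_inf' (hne : (univ : Finset (Fin m)).Nonempty) {x : Fin m → ℝ}
    (hx : x ∈ stdSimplex ℝ (Fin m)) (v : Fin m → ℝ) :
    univ.inf' hne v ≤ x ⬝ᵥ v := by
  have h : ∑ i, x i * univ.inf' hne v ≤ ∑ i, x i * v i :=
    Finset.sum_le_sum fun i _ => mul_le_mul_of_nonneg_left (Finset.inf'_le _ (mem_univ i)) (hx.1 i)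
  calc univ.inf' hne v = (∑ i, x i) * univ.inf' hne v := by rw [hx.2, one_mul]
    _ = ∑ i, x i * univ.inf' hne v := by rw [Finset.sum_mul]
    _ ≤ x ⬝ᵥ v := h

lemma innerMin_eq (hne : (univ : Finset (Fin m)).Nonempty) (A : Matrix (Fin m) (Fin n) ℝ)
    (y : Fin n → ℝ) : innerMin A y = univ.inf' hne (fun i => (A *ᵥ y) i) := by
  obtain ⟨i₀, -, hi₀⟩ := Finset.exists_mem_eq_inf' hne (fun i => (A *ᵥ y) i)
  have hbdd : BddBelow {r | ∃ x ∈ stdSimplex ℝ (Fin m), r = x ⬝ᵥ A *ᵥ y} := by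
    refine ⟨univ.inf' hne (fun i => (A *ᵥ y) i), ?_⟩
    rintro r ⟨x, hx, rfl⟩
    exact dot_ge_inf' hne hx _
  apply le_antisymm
  · exact csInf_le hbdd ⟨pureV m i₀, pureV_mem i₀, by rw [pureV_dot, hi₀]⟩
  · refine le_csInf ⟨pureV m i₀ ⬝ᵥ A *ᵥ y, pureV m i₀, pureV_mem i₀, rfl⟩ ?_
    rintro r ⟨x, hx, rfl⟩
    exact dot_ge_inf' hne hx _

lemma dot_D_le (hΔ : 0 ≤ Δ) {x : Fin m → ℝ} (hx : x ∈ stdSimplex ℝ (Fin m))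
    {y : Fin n → ℝ} (hy : y ∈ stdSimplex ℝ (Fin n))
    {D : Matrix (Fin m) (Fin n) ℝ} (hD : D ∈ Dset m n Δ) :
    x ⬝ᵥ D *ᵥ y ≤ Δ := by
  have hrow : ∀ i, (D *ᵥ y) i ≤ Δ := by
    intro i
    have h1 : ∀ j, D i j * y j ≤ Δ * y j := by
      intro j
      have : D i j ≤ Δ := le_trans (le_abs_self _)
        (le_trans (Finset.single_le_sum (f := fun i' => |D i' j|)
          (fun i' _ => abs_nonneg _) (mem_univ i)) (hD j))
      exact mul_le_mul_of_nonneg_right this (hy.1 j)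
    calc (D *ᵥ y) i = ∑ j, D i j * y j := rfl
      _ ≤ ∑ j, Δ * y j := Finset.sum_le_sum fun j _ => h1 j
      _ = Δ * ∑ j, y j := by rw [Finset.mul_sum]
      _ = Δ := by rw [hy.2, mul_one]
  calc x ⬝ᵥ D *ᵥ y = ∑ i, x i * (D *ᵥ y) i := rfl
    _ ≤ ∑ i, x i * Δ := Finset.sum_le_sum fun i _ =>
        mul_le_mul_of_nonneg_left (hrow i) (hx.1 i)
    _ = (∑ i, x i) * Δ := by rw [Finset.sum_mul]
    _ = Δ := by rw [hx.2, one_mul]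

lemma robustObj_eq (hne : (univ : Finset (Fin m)).Nonempty)
    (G' : Matrix (Fin m) (Fin n) ℝ) {Δ : ℝ} (hΔ : 0 ≤ Δ)
    {y : Fin n → ℝ} (hy : y ∈ stdSimplex ℝ (Fin n)) :
    robustObj G' Δ y = innerMin G' y - Δ := by
  rw [innerMin_eq hne]
  set c := univ.inf' hne (fun i => (G' *ᵥ y) i) with hc
  obtain ⟨i₀, -, hi₀⟩ := Finset.exists_mem_eq_inf' hne (fun i => (G' *ᵥ y) i)
  set D₀ : Matrix (Fin m) (Fin n) ℝ := fun i _ => if i = i₀ then Δ else 0 with hD₀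
  have hD₀mem : D₀ ∈ Dset m n Δ := by
    intro j
    have : ∀ i : Fin m, |D₀ i j| = if i = i₀ then Δ else 0 := by
      intro i; simp only [hD₀]; split <;> simp [abs_of_nonneg hΔ]
    rw [Finset.sum_congr rfl fun i _ => this i]
    simp
  have hDval : (D₀ *ᵥ y) i₀ = Δ := by
    have h : (D₀ *ᵥ y) i₀ = ∑ j, Δ * y j := by
      simp [mulVec, dotProduct, hD₀]
    rw [h, ← Finset.mul_sum, hy.2, mul_one]
  have hval : pureV m i₀ ⬝ᵥ (G' - D₀) *ᵥ y = c - Δ := by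
    rw [pureV_dot]
    have h : ((G' - D₀) *ᵥ y) i₀ = (G' *ᵥ y) i₀ - (D₀ *ᵥ y) i₀ := by
      simp [Matrix.sub_mulVec]
    rw [h, hDval, ← hi₀]
  have hbound : ∀ r ∈ {r | ∃ x ∈ stdSimplex ℝ (Fin m), ∃ D ∈ Dset m n Δ,
      r = x ⬝ᵥ (G' - D) *ᵥ y}, c - Δ ≤ r := by
    rintro r ⟨x, hx, D, hD, rfl⟩
    have h1 : x ⬝ᵥ (G' - D) *ᵥ y = x ⬝ᵥ G' *ᵥ y - x ⬝ᵥ D *ᵥ y := by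
      rw [Matrix.sub_mulVec, dotProduct_sub]
    rw [h1]
    exact sub_le_sub (dot_ge_inf' hne hx _) (dot_D_le hΔ hx hy hD)
  apply le_antisymm
  · exact csInf_le ⟨c - Δ, hbound⟩ ⟨pureV m i₀, pureV_mem i₀, D₀, hD₀mem, hval.symm⟩
  · exact le_csInf ⟨c - Δ, pureV m i₀, pureV_mem i₀, D₀, hD₀mem, hval.symm⟩ hbound

end helpers

/-- A victim optimizing against worst-case stealthy deception behaves
identically to a trusting victim: the maximizer set of the robust objective over the
simplex is exactly the security-policy set `S(G')`. -/
theorem robust_victim_eq_trusting_victim {m n : ℕ} (hm : 1 ≤ m) (hn : 1 ≤ n)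
    (G' : Matrix (Fin m) (Fin n) ℝ) (Δ : ℝ) (hΔ : 0 ≤ Δ) :
    {y | y ∈ stdSimplex ℝ (Fin n) ∧
        ∀ y' ∈ stdSimplex ℝ (Fin n), robustObj G' Δ y' ≤ robustObj G' Δ y}
      = secPolicies G' := by
  have hne : (univ : Finset (Fin m)).Nonempty := ⟨⟨0, hm⟩, mem_univ _⟩
  have hnen : (univ : Finset (Fin n)).Nonempty := ⟨⟨0, hn⟩, mem_univ _⟩
  set S := {r | ∃ y ∈ stdSimplex ℝ (Fin n), r = innerMin G' y} with hS
  have hSne : S.Nonempty := ⟨_, pureV n ⟨0, hn⟩, pureV_mem _, rfl⟩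
  -- bounded above
  set i₀ : Fin m := ⟨0, hm⟩
  set M := univ.sup' hnen (fun j => G' i₀ j) with hM
  have hSbdd : BddAbove S := by
    refine ⟨M, ?_⟩
    rintro r ⟨y, hy, rfl⟩
    rw [innerMin_eq hne]
    refine le_trans (Finset.inf'_le _ (mem_univ i₀)) ?_
    calc (G' *ᵥ y) i₀ = ∑ j, G' i₀ j * y j := rfl
      _ ≤ ∑ j, M * y j := Finset.sum_le_sum fun j _ =>
          mul_le_mul_of_nonneg_right (Finset.le_sup' _ (mem_univ j)) (hy.1 j)
      _ = M * ∑ j, y j := by rw [Finset.mul_sum]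
      _ = M := by rw [hy.2, mul_one]
  ext y
  simp only [Set.mem_setOf_eq, secPolicies]
  constructor
  · rintro ⟨hy, hmax⟩
    refine ⟨hy, fun i => ?_⟩
    have h1 : gameValue G' ≤ innerMin G' y := by
      apply csSup_le hSne
      rintro r ⟨y', hy', rfl⟩
      have := hmax y' hy'
      rw [robustObj_eq hne G' hΔ hy', robustObj_eq hne G' hΔ hy] at this
      linarith
    refine le_trans h1 ?_
    rw [innerMin_eq hne]
    exact Finset.inf'_le _ (mem_univ i)
  · rintro ⟨hy, hsec⟩
    refine ⟨hy, fun y' hy' => ?_⟩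
    rw [robustObj_eq hne G' hΔ hy', robustObj_eq hne G' hΔ hy]
    have h1 : innerMin G' y' ≤ gameValue G' := le_csSup hSbdd ⟨y', hy', rfl⟩
    have h2 : gameValue G' ≤ innerMin G' y := by
      rw [innerMin_eq hne]
      exact Finset.le_inf' hne _ fun i _ => hsec i
    linarith
end

section
/- Let m, n ≥ 1, let G' ∈ ℝ^{m×n}, and let Δ ≥ 0. Then the robust victim's security value satisfies max_{y ∈ Δ(n)} min_{x ∈ Δ(m), D ∈ 𝒟} xᵀ(G' − D)y = v_{G'} − Δ, where v_{G'} is the value of the zero-sum game G'. -/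
open Matrix Finset

/-
The adversary's best deception against a mixed strategy `y` is to pour its whole budget `Δ`
into the row the victim's best response plays, so the robust objective of `y` is its ordinary
security level shifted by `-Δ`. Maximising over the compact simplex then gives `v_{G'} - Δ`.
-/

section StdSimplex

variable {ι : Type*} [Fintype ι] {x v : ι → ℝ} {c : ℝ}

lemma le_dotProduct_of_mem_stdSimplex (hx : x ∈ stdSimplex ℝ ι) (hc : ∀ i, c ≤ v i) :
    c ≤ x ⬝ᵥ v :=
  calc c = ∑ i, x i * c := by rw [← sum_mul, hx.2, one_mul]
    _ ≤ ∑ i, x i * v i := sum_le_sum fun i _ => mul_le_mul_of_nonneg_left (hc i) (hx.1 i)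

lemma dotProduct_le_of_mem_stdSimplex (hx : x ∈ stdSimplex ℝ ι) (hc : ∀ i, v i ≤ c) :
    x ⬝ᵥ v ≤ c :=
  calc ∑ i, x i * v i ≤ ∑ i, x i * c :=
        sum_le_sum fun i _ => mul_le_mul_of_nonneg_left (hc i) (hx.1 i)
    _ = c := by rw [← sum_mul, hx.2, one_mul]

lemma isLeast_dotProduct_stdSimplex {i₀ : ι} (h₀ : ∀ i, v i₀ ≤ v i) :
    IsLeast {r | ∃ x ∈ stdSimplex ℝ ι, r = x ⬝ᵥ v} (v i₀) := by
  classical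
  refine ⟨⟨Pi.single i₀ 1, single_mem_stdSimplex ℝ i₀, by rw [single_dotProduct, one_mul]⟩, ?_⟩
  rintro _ ⟨x, hx, rfl⟩
  exact le_dotProduct_of_mem_stdSimplex hx h₀

end StdSimplex

section Game

variable {m n : ℕ} {Δ : ℝ} {x : Fin m → ℝ} {y : Fin n → ℝ}

lemma dotProduct_mulVec_le_of_mem_Dset {D : Matrix (Fin m) (Fin n) ℝ}
    (hx : x ∈ stdSimplex ℝ (Fin m)) (hy : y ∈ stdSimplex ℝ (Fin n)) (hD : D ∈ Dset m n Δ) :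
    x ⬝ᵥ D *ᵥ y ≤ Δ := by
  rw [dotProduct_mulVec, dotProduct_comm]
  refine dotProduct_le_of_mem_stdSimplex hy fun j => ?_
  calc (x ᵥ* D) j = ∑ i, x i * D i j := rfl
    _ ≤ ∑ i, |D i j| := sum_le_sum fun i _ => (le_abs_self _).trans <| by
        rw [abs_mul, abs_of_nonneg (hx.1 i)]
        exact mul_le_of_le_one_left (abs_nonneg _) (mem_Icc_of_mem_stdSimplex hx i).2
    _ ≤ Δ := hD j

lemma vecMulVec_single_one_mem_Dset (hΔ : 0 ≤ Δ) (i₀ : Fin m) :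
    vecMulVec (Pi.single i₀ Δ) (1 : Fin n → ℝ) ∈ Dset m n Δ := fun j => by
  simp [vecMulVec_apply, Pi.single_apply, apply_ite, abs_of_nonneg hΔ]

lemma isLeast_robustObj {G' : Matrix (Fin m) (Fin n) ℝ} (hΔ : 0 ≤ Δ)
    (hy : y ∈ stdSimplex ℝ (Fin n)) {i₀ : Fin m} (h₀ : ∀ i, (G' *ᵥ y) i₀ ≤ (G' *ᵥ y) i) :
    IsLeast {r | ∃ x ∈ stdSimplex ℝ (Fin m), ∃ D ∈ Dset m n Δ, r = x ⬝ᵥ (G' - D) *ᵥ y}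
      ((G' *ᵥ y) i₀ - Δ) := by
  refine ⟨⟨Pi.single i₀ 1, single_mem_stdSimplex ℝ i₀, _,
    vecMulVec_single_one_mem_Dset hΔ i₀, ?_⟩, ?_⟩
  · rw [single_dotProduct, one_mul, sub_mulVec, Pi.sub_apply, vecMulVec_mulVec]
    simp [one_dotProduct, hy.2]
  · rintro _ ⟨x, hx, D, hD, rfl⟩
    rw [sub_mulVec, dotProduct_sub]
    exact sub_le_sub ((isLeast_dotProduct_stdSimplex h₀).2 ⟨x, hx, rfl⟩)
      (dotProduct_mulVec_le_of_mem_Dset hx hy hD)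

variable [Nonempty (Fin m)]

lemma innerMin_eq_inf' (A : Matrix (Fin m) (Fin n) ℝ) (y : Fin n → ℝ) :
    innerMin A y = univ.inf' univ_nonempty (A *ᵥ y) := by
  obtain ⟨i₀, -, h⟩ := exists_mem_eq_inf' univ_nonempty (A *ᵥ y)
  rw [h]
  exact (isLeast_dotProduct_stdSimplex fun i => h ▸ inf'_le _ (mem_univ i)).csInf_eq

lemma robustObj_eq_innerMin_sub (G' : Matrix (Fin m) (Fin n) ℝ) (hΔ : 0 ≤ Δ)
    (hy : y ∈ stdSimplex ℝ (Fin n)) : robustObj G' Δ y = innerMin G' y - Δ := by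
  obtain ⟨i₀, -, h⟩ := exists_mem_eq_inf' univ_nonempty (G' *ᵥ y)
  rw [innerMin_eq_inf', h]
  exact (isLeast_robustObj hΔ hy fun i => h ▸ inf'_le _ (mem_univ i)).csInf_eq

lemma continuous_innerMin (A : Matrix (Fin m) (Fin n) ℝ) : Continuous (innerMin A) := by
  rw [funext (innerMin_eq_inf' A)]
  exact Continuous.finset_inf'_apply _ fun i _ =>
    (continuous_apply i).comp (continuous_const.matrix_mulVec continuous_id)

lemma isGreatest_gameValue [Nonempty (Fin n)] (A : Matrix (Fin m) (Fin n) ℝ) :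
    IsGreatest {r | ∃ y ∈ stdSimplex ℝ (Fin n), r = innerMin A y} (gameValue A) := by
  obtain ⟨y₀, hy₀, hmax⟩ := (isCompact_stdSimplex ℝ (Fin n)).exists_isMaxOn
    ⟨_, single_mem_stdSimplex ℝ (Classical.arbitrary _)⟩ (continuous_innerMin A).continuousOn
  have hgreatest : IsGreatest {r | ∃ y ∈ stdSimplex ℝ (Fin n), r = innerMin A y}
      (innerMin A y₀) := ⟨⟨y₀, hy₀, rfl⟩, by rintro _ ⟨y, hy, rfl⟩; exact hmax hy⟩
  rwa [gameValue, hgreatest.csSup_eq]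

end Game

/-- The robust victim's security value is `v_{G'} - Δ`:
the max over `y ∈ Δ(n)` of the robust objective equals `gameValue G' - Δ` and is attained. -/
theorem robust_security_value {m n : ℕ} (hm : 1 ≤ m) (hn : 1 ≤ n)
    (G' : Matrix (Fin m) (Fin n) ℝ) (Δ : ℝ) (hΔ : 0 ≤ Δ) :
    IsGreatest {r | ∃ y ∈ stdSimplex ℝ (Fin n), r = robustObj G' Δ y}
      (gameValue G' - Δ) := by
  have : Nonempty (Fin m) := ⟨⟨0, hm⟩⟩
  have : Nonempty (Fin n) := ⟨⟨0, hn⟩⟩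
  obtain ⟨⟨y₀, hy₀, hv⟩, hub⟩ := isGreatest_gameValue G'
  refine ⟨⟨y₀, hy₀, by rw [robustObj_eq_innerMin_sub G' hΔ hy₀, hv]⟩, ?_⟩
  rintro _ ⟨y, hy, rfl⟩
  rw [robustObj_eq_innerMin_sub G' hΔ hy]
  exact sub_le_sub_right (hub ⟨y, hy, rfl⟩) Δ
end
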